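/- arXiv:2503.08948 — 2 statements merged into one kernel-verified Lean document; each statement's English description precedes it below -/
import Mathlib

section
/- Let C ⊆ {0,1}^n be a code with exactly s positive pairwise distances. Then |C| ≤ C(n+s, s) - Σ_{t : 2t ≤ s} (C(t+n-1, t) - p(t)), where p(t) is the number of partitions of t. -/
/-!
Polynomial method. For `c ∈ C` the function `x ↦ ∏ d ∈ D, (d - dist x c)` on the cube is a
multilinear polynomial of degree at most `s = #D`; it is nonzero at `c` (as `0 ∉ D`) and vanishes on
`C \ {c}`. These functions are therefore linearly independent, so `|C|` is at most the dimension
`∑ i ≤ s, C(n, i)` of the multilinear polynomials of degree `≤ s`.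

This beats the stated bound: `C(n + s, s) = ∑ i ≤ s, C(n + i - 1, i)` counts multisets of
size `≤ s`, which contain the sets of size `≤ s`. For `t ≥ 1`, the doubles `m + m` of the
multisets `m` of size `t` are further multisets of size `2t` that are not sets, which pays for
the `t`-th summand; the summand for `t = 0` is `1 - p 0 = 0`.
-/

/-- Hamming distance between Boolean vectors. -/
def hd {n : ℕ} (u v : Fin n → Bool) : ℕ :=
  (Finset.univ.filter (fun j => u j ≠ v j)).card

open Finset Module Submodule

section LowDegree

variable {R ι : Type*} [CommRing R]

/-- The monomial `∏ j ∈ S, x j` on the cube `{0,1}^ι`. -/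
noncomputable def boolMonomial (S : Finset ι) : (ι → Bool) → R :=
  Set.indicator {x | ∀ j ∈ S, x j = true} 1

@[simp]
theorem boolMonomial_empty : (boolMonomial ∅ : (ι → Bool) → R) = 1 := by
  simp [boolMonomial]

theorem boolMonomial_singleton (j : ι) (x : ι → Bool) :
    (boolMonomial {j} x : R) = if x j then 1 else 0 := by
  simp [boolMonomial, Set.indicator_apply]

theorem boolMonomial_union [DecidableEq ι] (S T : Finset ι) :
    (boolMonomial (S ∪ T) : (ι → Bool) → R) = boolMonomial S * boolMonomial T := by
  rw [boolMonomial, boolMonomial, boolMonomial, ← Set.inter_indicator_one]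
  congr 1
  ext x
  simp [or_imp, forall_and]

variable (R ι) in
def lowDegree (k : ℕ) : Submodule R ((ι → Bool) → R) :=
  span R (boolMonomial '' {S | S.card ≤ k})

theorem boolMonomial_mem_lowDegree {S : Finset ι} {k : ℕ} (h : S.card ≤ k) :
    (boolMonomial S : (ι → Bool) → R) ∈ lowDegree R ι k :=
  subset_span ⟨S, h, rfl⟩

theorem one_mem_lowDegree (k : ℕ) : (1 : (ι → Bool) → R) ∈ lowDegree R ι k := by
  simpa using boolMonomial_mem_lowDegree (R := R) (S := (∅ : Finset ι)) (Nat.zero_le k)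

instance : SetLike.GradedMonoid (lowDegree R ι) where
  one_mem := one_mem_lowDegree 0
  mul_mem a b f g hf hg := by
    classical
    have hfg := mul_mem_mul hf hg
    rw [lowDegree, lowDegree, span_mul_span] at hfg
    refine span_le.2 ?_ hfg
    rintro _ ⟨_, ⟨S, hS, rfl⟩, _, ⟨T, hT, rfl⟩, rfl⟩
    change boolMonomial S * boolMonomial T ∈ _
    rw [← boolMonomial_union]
    exact boolMonomial_mem_lowDegree ((card_union_le S T).trans (add_le_add hS hT))

theorem card_filter_card_le [Fintype ι] (k : ℕ) :
    #{S : Finset ι | S.card ≤ k} = ∑ i ∈ range (k + 1), (Fintype.card ι).choose i := by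
  rw [card_eq_sum_card_fiberwise (f := card) (t := range (k + 1)) fun S hS => by
    simp only [coe_filter, Set.mem_ofPred_eq, coe_range, Set.mem_Iio] at hS ⊢
    omega]
  refine sum_congr rfl fun i hi => ?_
  rw [filter_filter, ← card_univ, ← card_powersetCard, powersetCard_eq_filter]
  congr 1
  ext S
  simp only [mem_filter, mem_range, mem_univ, mem_powerset, subset_univ, true_and] at hi ⊢
  omega

theorem natCast_sub_hammingDist_mem_lowDegree [Fintype ι] (d : ℕ) (c : ι → Bool) :
    (fun x => (d : R) - hammingDist x c) ∈ lowDegree R ι 1 := by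
  have hdist : (fun x => (hammingDist x c : R)) =
      ∑ j, if c j then 1 - boolMonomial {j} else boolMonomial {j} := by
    funext x
    simp only [hammingDist, card_filter, Nat.cast_sum, Finset.sum_apply]
    refine sum_congr rfl fun j _ => ?_
    cases hx : x j <;> cases hc : c j <;> simp [boolMonomial_singleton, hx]
  have hsub : (fun x => (d : R) - hammingDist x c) = d • 1 - fun x => (hammingDist x c : R) := by
    funext x
    simp
  rw [hsub, hdist]
  refine sub_mem (nsmul_mem (one_mem_lowDegree 1) d) (sum_mem fun j _ => ?_)
  have hj : (boolMonomial {j} : (ι → Bool) → R) ∈ lowDegree R ι 1 :=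
    boolMonomial_mem_lowDegree (card_singleton j).le
  split_ifs
  · exact sub_mem (one_mem_lowDegree 1) hj
  · exact hj

variable (R) in
noncomputable def annihilatingPoly [Fintype ι] (D : Finset ℕ) (c : ι → Bool) : (ι → Bool) → R :=
  ∏ d ∈ D, fun x => (d : R) - hammingDist x c

theorem annihilatingPoly_apply [Fintype ι] (D : Finset ℕ) (c x : ι → Bool) :
    annihilatingPoly R D c x = ∏ d ∈ D, ((d : R) - hammingDist x c) :=
  Finset.prod_apply x D _

theorem annihilatingPoly_mem_lowDegree [Fintype ι] (D : Finset ℕ) (c : ι → Bool) :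
    annihilatingPoly R D c ∈ lowDegree R ι #D := by
  rw [card_eq_sum_ones]
  exact SetLike.prod_mem_graded (lowDegree R ι) (fun _ => 1) _
    fun d _ => natCast_sub_hammingDist_mem_lowDegree d c

end LowDegree

section Field

variable {K ι : Type*} [Field K]

instance [Finite ι] (k : ℕ) : FiniteDimensional K (lowDegree K ι k) :=
  FiniteDimensional.span_of_finite K ((Set.toFinite _).image _)

theorem finrank_lowDegree_le [Fintype ι] (k : ℕ) :
    finrank K (lowDegree K ι k) ≤ ∑ i ∈ range (k + 1), (Fintype.card ι).choose i := by
  classical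
  rw [← card_filter_card_le, ← Fintype.card_subtype, lowDegree, Set.image_eq_range]
  exact finrank_range_le_card _

theorem card_le_finrank_of_diagonal {X : Type*} (V : Submodule K (X → K)) [FiniteDimensional K V]
    (C : Finset X) (f : X → X → K) (hf : ∀ c ∈ C, f c ∈ V) (hdiag : ∀ c ∈ C, f c c ≠ 0)
    (hoff : ∀ c ∈ C, ∀ c' ∈ C, c ≠ c' → f c c' = 0) : #C ≤ finrank K V := by
  have hli : LinearIndependent K (fun c : C => f c) := by
    rw [Fintype.linearIndependent_iff]
    intro a ha c
    have hc := congrFun ha c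
    simp only [Finset.sum_apply, Pi.smul_apply, smul_eq_mul, Pi.zero_apply] at hc
    rw [sum_eq_single c (fun c' _ hc' => by rw [hoff _ c'.2 _ c.2 (Subtype.coe_ne_coe.2 hc'),
      mul_zero]) (by simp)] at hc
    exact (mul_eq_zero.1 hc).resolve_right (hdiag c c.2)
  calc #C = finrank K (span K (Set.range fun c : C => f c)) := by
        rw [finrank_span_eq_card hli, Fintype.card_coe]
    _ ≤ finrank K V := finrank_mono (span_le.2 (Set.range_subset_iff.2 fun c => hf c c.2))

end Field

theorem card_le_sum_choose_of_hammingDist_mem {ι : Type*} [Fintype ι] (C : Finset (ι → Bool))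
    (D : Finset ℕ) (h0 : 0 ∉ D) (hD : ∀ u ∈ C, ∀ v ∈ C, u ≠ v → hammingDist u v ∈ D) :
    #C ≤ ∑ i ∈ range (#D + 1), (Fintype.card ι).choose i := by
  refine (card_le_finrank_of_diagonal (lowDegree ℚ ι #D) C (annihilatingPoly ℚ D)
    (fun c _ => annihilatingPoly_mem_lowDegree D c) (fun c _ => ?_)
    (fun c hc c' hc' hne => ?_)).trans (finrank_lowDegree_le #D)
  · rw [annihilatingPoly_apply, hammingDist_self, Nat.cast_zero, prod_ne_zero_iff]
    exact fun d hd => by simpa using ne_of_mem_of_not_mem hd h0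
  · rw [annihilatingPoly_apply]
    exact prod_eq_zero (hD c' hc' c hc hne.symm) (sub_self _)

section Sym

variable {α : Type*} {k : ℕ}

def Sym.ofFinsetCard (S : {S : Finset α // S.card = k}) : Sym α k :=
  ⟨S.1.val, S.2⟩

theorem Sym.ofFinsetCard_injective : Function.Injective (Sym.ofFinsetCard (α := α) (k := k)) :=
  fun _ _ h => Subtype.ext (Finset.val_injective (congrArg Subtype.val h))

def Sym.double (m : Sym α k) : Sym α (2 * k) :=
  ⟨2 • m.1, by simp⟩

theorem Sym.double_injective [DecidableEq α] :
    Function.Injective (Sym.double (α := α) (k := k)) := by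
  intro m m' h
  refine Subtype.ext (Multiset.ext.2 fun x => ?_)
  have := congrArg (fun m : Sym α (2 * k) => m.1.count x) h
  simp only [Sym.double, Multiset.count_nsmul] at this
  omega

theorem Sym.double_ne_ofFinsetCard (hk : k ≠ 0) (m : Sym α k)
    (S : {S : Finset α // S.card = 2 * k}) :
    m.double ≠ Sym.ofFinsetCard S := by
  intro h
  have hnodup : (m.1 + m.1).Nodup := by
    rw [← two_nsmul, show 2 • m.1 = S.1.val from congrArg Subtype.val h]
    exact S.1.nodup
  obtain ⟨x, hx⟩ := Multiset.card_pos_iff_exists_mem.1 (m.2 ▸ Nat.pos_of_ne_zero hk)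
  exact Multiset.disjoint_left.1 (Multiset.nodup_add.1 hnodup).2.2 hx hx

variable [DecidableEq α] [Fintype α]

theorem card_sym_add_card_finset_le (hk : k ≠ 0) :
    Fintype.card (Sym α k) + Fintype.card {S : Finset α // S.card = 2 * k}
      ≤ Fintype.card (Sym α (2 * k)) := by
  rw [← Fintype.card_sum]
  exact Fintype.card_le_of_injective _
    (Sym.double_injective.sumElim Sym.ofFinsetCard_injective (Sym.double_ne_ofFinsetCard hk))

end Sym

theorem Nat.choose_le_multichoose (n k : ℕ) : n.choose k ≤ n.multichoose k := by
  simpa [Fintype.card_finset_len, Sym.card_sym_fin_eq_multichoose] using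
    Fintype.card_le_of_injective _ (Sym.ofFinsetCard_injective (α := Fin n) (k := k))

theorem Nat.multichoose_add_choose_two_mul_le (n : ℕ) {k : ℕ} (hk : k ≠ 0) :
    n.multichoose k + n.choose (2 * k) ≤ n.multichoose (2 * k) := by
  simpa [Fintype.card_finset_len, Sym.card_sym_fin_eq_multichoose] using
    card_sym_add_card_finset_le (α := Fin n) hk

theorem Nat.multichoose_sub_card_partition_add_choose_two_mul_le (n t : ℕ) :
    n.multichoose t - Fintype.card t.Partition + n.choose (2 * t) ≤ n.multichoose (2 * t) := by
  rcases eq_or_ne t 0 with rfl | ht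
  · have : 0 < Fintype.card (Nat.Partition 0) := Fintype.card_pos
    simp
  · exact (Nat.add_le_add_right (Nat.sub_le _ _) _).trans
      (n.multichoose_add_choose_two_mul_le ht)

theorem sum_choose_le_choose_sub (n s : ℕ) :
    ∑ i ∈ range (s + 1), n.choose i ≤ (n + s).choose s -
      ∑ t ∈ range (s / 2 + 1), ((t + n - 1).choose t - Fintype.card (Nat.Partition t)) := by
  have hmultichoose : ∀ t, (t + n - 1).choose t = n.multichoose t := fun t => by
    rw [Nat.multichoose_eq, add_comm]
  have hsum : ∑ i ∈ range (s + 1), n.multichoose i = (n + s).choose s := by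
    rw [Nat.sum_range_multichoose, ← Nat.choose_symm_add, add_comm]
  have hrange : (range (s / 2 + 1)).image (2 * ·) ⊆ range (s + 1) := by
    intro i
    simp only [mem_image, mem_range]
    omega
  have hle := sum_le_sum fun i (_ : i ∈ range (s + 1)) => n.choose_le_multichoose i
  suffices ∑ t ∈ range (s / 2 + 1), (n.multichoose t - Fintype.card t.Partition)
      ≤ ∑ i ∈ range (s + 1), n.multichoose i - ∑ i ∈ range (s + 1), n.choose i by
    simp only [hmultichoose]
    omega
  calc ∑ t ∈ range (s / 2 + 1), (n.multichoose t - Fintype.card t.Partition)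
      ≤ ∑ t ∈ range (s / 2 + 1), (n.multichoose (2 * t) - n.choose (2 * t)) :=
        sum_le_sum fun t _ =>
          Nat.le_sub_of_add_le (n.multichoose_sub_card_partition_add_choose_two_mul_le t)
    _ = ∑ i ∈ (range (s / 2 + 1)).image (2 * ·), (n.multichoose i - n.choose i) :=
        (sum_image (f := fun i => n.multichoose i - n.choose i) fun _ _ _ _ h => by omega).symm
    _ ≤ ∑ i ∈ range (s + 1), (n.multichoose i - n.choose i) := sum_le_sum_of_subset hrange
    _ = _ := sum_tsub_distrib _ fun i _ => n.choose_le_multichoose i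

theorem stmt11 {n s : ℕ} (C : Finset (Fin n → Bool)) (D : Finset ℕ)
    (hcard : D.card = s) (hpos : ∀ d ∈ D, 0 < d)
    (hset : {m | ∃ u ∈ C, ∃ v ∈ C, u ≠ v ∧ hd u v = m} = ↑D) :
    C.card ≤ (n + s).choose s -
      ∑ t ∈ Finset.range (s / 2 + 1),
        ((t + n - 1).choose t - Fintype.card (Nat.Partition t)) := by
  have hD : ∀ u ∈ C, ∀ v ∈ C, u ≠ v → hammingDist u v ∈ D := fun u hu v hv huv =>
    mem_coe.1 (hset ▸ ⟨u, hu, v, hv, huv, rfl⟩)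
  calc C.card ≤ ∑ i ∈ range (s + 1), n.choose i := by
        simpa [hcard] using
          card_le_sum_choose_of_hammingDist_mem C D (fun h0 => (hpos 0 h0).false) hD
    _ ≤ _ := sum_choose_le_choose_sub n s
end

section
/- Let C be a binary code of length n ≥ 6 with at most two distinct pairwise distances. Assuming the bound A_2(n,{d_1,d_2}) ≤ C(n,2)+1 from Barg et al., the code consisting of all weight-2 words together with the zero word achieves this bound: it has distances {2,4} and size C(n,2)+1. -/
/-- Hamming weight of a Boolean vector. -/
def wt {n : ℕ} (u : Fin n → Bool) : ℕ :=
  (Finset.univ.filter (fun j => u j = true)).card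

/-!
Identify a word with its support. Weight is then cardinality and Hamming distance is the
cardinality of the symmetric difference, `#(s ∆ t) = #s + #t - 2 #(s ∩ t)`. Two distinct
2-sets meet in at most one point, so they are at distance 2 or 4, and every 2-set is at
distance 2 from the empty set; both distances occur once `n ≥ 4`. The code is the
image of the 2-subsets of `Fin n` plus one extra word, hence has `n.choose 2 + 1` elements.
-/

open Finset
open scoped symmDiff

lemma Finset.card_symmDiff_add_two_mul_card_inter {α : Type*} [DecidableEq α]
    (s t : Finset α) : #(s ∆ t) + 2 * #(s ∩ t) = #s + #t := by
  have hs := card_sdiff_add_card_inter s t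
  have ht := card_sdiff_add_card_inter t s
  rw [inter_comm] at ht
  rw [symmDiff_def, sup_eq_union, card_union_of_disjoint disjoint_sdiff_sdiff]
  omega

lemma Finset.card_symmDiff_eq_two_or_four {α : Type*} [DecidableEq α] {s t : Finset α}
    (hs : #s = 2) (ht : #t = 2) (hst : s ≠ t) : #(s ∆ t) = 2 ∨ #(s ∆ t) = 4 := by
  have hsym := card_symmDiff_add_two_mul_card_inter s t
  have hinter : #(s ∩ t) < 2 := by
    by_contra! h
    have hs' : s ∩ t = s := eq_of_subset_of_card_le inter_subset_left (by omega)
    have ht' : s ∩ t = t := eq_of_subset_of_card_le inter_subset_right (by omega)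
    exact hst (hs'.symm.trans ht')
  omega

variable {n : ℕ}

def wordEquivFinset : (Fin n → Bool) ≃ Finset (Fin n) where
  toFun u := univ.filter (u · = true)
  invFun s j := decide (j ∈ s)
  left_inv u := by funext j; simp
  right_inv s := by ext j; simp

lemma wt_eq_card (u : Fin n → Bool) : wt u = #(wordEquivFinset u) := rfl

lemma wordEquivFinset_zero : wordEquivFinset (fun _ : Fin n => false) = ∅ := by
  ext j; simp [wordEquivFinset]

lemma hd_eq_card_symmDiff (u v : Fin n → Bool) :
    hd u v = #(wordEquivFinset u ∆ wordEquivFinset v) := by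
  unfold hd
  congr 1
  ext j
  simp only [wordEquivFinset, Equiv.coe_fn_mk, mem_symmDiff, mem_filter, mem_univ, true_and]
  cases u j <;> cases v j <;> simp

lemma hd_self (u : Fin n → Bool) : hd u u = 0 := by
  simp [hd]

lemma hd_zero_left (u : Fin n → Bool) : hd (fun _ => false) u = wt u := by
  rw [hd_eq_card_symmDiff, wordEquivFinset_zero, ← bot_eq_empty, bot_symmDiff, wt_eq_card]

lemma hd_zero_right (u : Fin n → Bool) : hd u (fun _ => false) = wt u := by
  rw [hd_eq_card_symmDiff, wordEquivFinset_zero, ← bot_eq_empty, symmDiff_bot, wt_eq_card]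

lemma hd_eq_two_or_four_of_wt_eq_two {u v : Fin n → Bool} (hu : wt u = 2) (hv : wt v = 2)
    (huv : u ≠ v) : hd u v = 2 ∨ hd u v = 4 := by
  rw [hd_eq_card_symmDiff]
  exact card_symmDiff_eq_two_or_four hu hv (wordEquivFinset.injective.ne huv)

lemma card_filter_wt_eq (k : ℕ) :
    #(univ.filter fun u : Fin n → Bool => wt u = k) = n.choose k := by
  have hchoose : n.choose k = #(powersetCard k (univ : Finset (Fin n))) := by simp
  rw [hchoose]
  exact card_equiv wordEquivFinset fun u => by
    rw [mem_filter, mem_powersetCard]; simp [wt_eq_card]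

lemma exists_wt_eq_two_hd_eq_four (hn : 4 ≤ n) :
    ∃ u v : Fin n → Bool, wt u = 2 ∧ wt v = 2 ∧ hd u v = 4 := by
  let e := Fin.castLEEmb hn
  refine ⟨wordEquivFinset.symm (({0, 1} : Finset (Fin 4)).map e),
    wordEquivFinset.symm (({2, 3} : Finset (Fin 4)).map e), ?_, ?_, ?_⟩
  · rw [wt_eq_card, Equiv.apply_symm_apply, card_map]; rfl
  · rw [wt_eq_card, Equiv.apply_symm_apply, card_map]; rfl
  · have hdisj : Disjoint (({0, 1} : Finset (Fin 4)).map e) (({2, 3} : Finset (Fin 4)).map e) :=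
      (disjoint_map e).mpr (by decide)
    rw [hd_eq_card_symmDiff, Equiv.apply_symm_apply, Equiv.apply_symm_apply,
      hdisj.symmDiff_eq_sup, sup_eq_union, card_union_of_disjoint hdisj, card_map, card_map]
    rfl

theorem stmt14_general {n : ℕ} (hn : 6 ≤ n) :
    ({m | ∃ u ∈ Finset.univ.filter (fun u : Fin n → Bool => wt u = 2) ∪
            {fun _ => false},
        ∃ v ∈ Finset.univ.filter (fun u : Fin n → Bool => wt u = 2) ∪
            {fun _ => false}, u ≠ v ∧ hd u v = m} = {2, 4}) ∧
    (Finset.univ.filter (fun u : Fin n → Bool => wt u = 2) ∪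
        {fun _ => false}).card = n.choose 2 + 1 := by
  have hzero : wt (fun _ : Fin n => false) ≠ 2 := by
    simp [wt_eq_card, wordEquivFinset_zero]
  refine ⟨Set.ext fun m => ⟨?_, ?_⟩, ?_⟩
  · rintro ⟨u, hu, v, hv, huv, rfl⟩
    simp only [mem_union, mem_filter, mem_univ, true_and, mem_singleton] at hu hv
    rcases hu with hu | rfl <;> rcases hv with hv | rfl
    · exact hd_eq_two_or_four_of_wt_eq_two hu hv huv
    · exact .inl ((hd_zero_right u).trans hu)
    · exact .inl ((hd_zero_left v).trans hv)
    · exact absurd rfl huv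
  · obtain ⟨u, v, hu, hv, huv⟩ := exists_wt_eq_two_hd_eq_four (by omega : 4 ≤ n)
    have hu_ne : u ≠ fun _ => false := fun h => hzero (h ▸ hu)
    rintro (rfl | rfl)
    · exact ⟨u, by simp [hu], _, by simp, hu_ne, (hd_zero_right u).trans hu⟩
    · refine ⟨u, by simp [hu], v, by simp [hv], fun h => ?_, huv⟩
      rw [h, hd_self] at huv
      omega
  · rw [card_union_of_disjoint (disjoint_singleton_right.mpr (by simpa using hzero)),
      card_filter_wt_eq, card_singleton]

theorem stmt14 {n : ℕ} (hn : 6 ≤ n)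
    (hbound : ∀ (d1 d2 : ℕ) (C : Finset (Fin n → Bool)),
      (∀ u ∈ C, ∀ v ∈ C, u ≠ v → hd u v = d1 ∨ hd u v = d2) →
        C.card ≤ n.choose 2 + 1) :
    ({m | ∃ u ∈ Finset.univ.filter (fun u : Fin n → Bool => wt u = 2) ∪
            {fun _ => false},
        ∃ v ∈ Finset.univ.filter (fun u : Fin n → Bool => wt u = 2) ∪
            {fun _ => false}, u ≠ v ∧ hd u v = m} = {2, 4}) ∧
    (Finset.univ.filter (fun u : Fin n → Bool => wt u = 2) ∪
        {fun _ => false}).card = n.choose 2 + 1 :=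
  stmt14_general hn
end
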